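/- Let Ω ⊊ ℝⁿ be an (ε,δ)-domain. If Q is a dyadic cube in ℝⁿ with ℓ(Q) < δ, then there is a point z in the interior of Q such that d_Ω(z) ≥ ε·ℓ(Q)/32. -/

import Mathlib

open Set Metric MeasureTheory
open scoped ENNReal

noncomputable section

abbrev Eu (n : ℕ) := EuclideanSpace ℝ (Fin n)

variable {n : ℕ}

/-- Distance to the boundary of `Ω`. -/
def dOm (Ω : Set (Eu n)) (x : Eu n) : ℝ := Metric.infDist x (frontier Ω)

/-- A (Lipschitz) curve in `Ω` from `x` to `y`, parametrized on `[0,1]`. -/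
structure IsCurve (Ω : Set (Eu n)) (γ : ℝ → Eu n) (x y : Eu n) : Prop where
  lipschitz : ∃ K, LipschitzOnWith K γ (Set.Icc 0 1)
  source : γ 0 = x
  target : γ 1 = y
  mem : ∀ t ∈ Set.Icc (0:ℝ) 1, γ t ∈ Ω

/-- Arclength of the portion of the curve between parameters `t₁` and `t₂`. -/
def arclengthOn (γ : ℝ → Eu n) (t₁ t₂ : ℝ) : ℝ := ∫ t in t₁..t₂, ‖deriv γ t‖

/-- Arclength of a curve parametrized on `[0,1]`. -/
def arclength (γ : ℝ → Eu n) : ℝ := arclengthOn γ 0 1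

/-- Line integral `∫_γ g ds` of a function `g` along a curve `γ`. -/
def lineIntegral (g : Eu n → ℝ) (γ : ℝ → Eu n) : ℝ := ∫ t in (0:ℝ)..1, g (γ t) * ‖deriv γ t‖

/-- The quasi-hyperbolic distance `k_Ω`. -/
def kDist (Ω : Set (Eu n)) (x y : Eu n) : ℝ :=
  sInf { r | ∃ γ : ℝ → Eu n, IsCurve Ω γ x y ∧ r = lineIntegral (fun z => (dOm Ω z)⁻¹) γ }

/-- Quasi-hyperbolic distance from a point to a set. -/
def kDistSet (Ω : Set (Eu n)) (x : Eu n) (S : Set (Eu n)) : ℝ := sInf (kDist Ω x '' S)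

/-- The distance `j_Ω`. -/
def jDist (Ω : Set (Eu n)) (x y : Eu n) : ℝ :=
  (1/2) * Real.log ((1 + dist x y / dOm Ω x) * (1 + dist x y / dOm Ω y))

/-- A quasi-hyperbolic geodesic from `x` to `y` in `Ω`. -/
def IsQHGeodesic (Ω : Set (Eu n)) (γ : ℝ → Eu n) (x y : Eu n) : Prop :=
  IsCurve Ω γ x y ∧ lineIntegral (fun z => (dOm Ω z)⁻¹) γ = kDist Ω x y

/-- `Ω` is a domain: a nonempty proper open connected subset of `ℝⁿ`. -/
def IsDom (Ω : Set (Eu n)) : Prop := IsOpen Ω ∧ IsConnected Ω ∧ Ω ≠ Set.univ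

/-- `(ε,δ)`-domain in the sense of Jones. -/
def IsEpsDeltaDomain (Ω : Set (Eu n)) (ε δ : ℝ) : Prop :=
  ∀ x ∈ Ω, ∀ y ∈ Ω, dist x y < δ → ∃ γ : ℝ → Eu n, IsCurve Ω γ x y ∧
    arclength γ ≤ ε⁻¹ * dist x y ∧
    ∀ t ∈ Set.Icc (0:ℝ) 1, dOm Ω (γ t) ≥ ε * (dist (γ t) x * dist (γ t) y) / dist x y

/-- Closed axis-parallel cube with lower corner `a` and sidelength `l`. -/
def cube (a : Eu n) (l : ℝ) : Set (Eu n) := {x : Eu n | ∀ i, x i ∈ Set.Icc (a i) (a i + l)}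

/-- `cube a l` is a dyadic cube. -/
def IsDyadic (a : Eu n) (l : ℝ) : Prop :=
  ∃ (k : ℤ) (m : Fin n → ℤ), l = 2 ^ (-k) ∧ ∀ i, a i = (m i : ℝ) * 2 ^ (-k)

/-- The dyadic cube of generation `k` indexed by `m`. -/
def dyCube (k : ℤ) (m : Fin n → ℤ) : Set (Eu n) :=
  {x : Eu n | ∀ i, x i ∈ Set.Icc ((m i : ℝ) * 2 ^ (-k)) ((m i : ℝ) * 2 ^ (-k) + 2 ^ (-k))}

/-- Average of `f` over `Q`. -/
def avg (f : Eu n → ℝ) (Q : Set (Eu n)) : ℝ := ⨍ x in Q, f x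

/-- Mean oscillation of `f` over `Q`. -/
def mo (f : Eu n → ℝ) (Q : Set (Eu n)) : ℝ := ⨍ x in Q, |f x - avg f Q|

/-- The BMO seminorm of `f` over `U` (supremum over cubes contained in `U`). -/
def bmoSup (U : Set (Eu n)) (f : Eu n → ℝ) : ℝ≥0∞ :=
  ⨆ (a : Eu n) (l : ℝ) (_ : 0 < l) (_ : cube a l ⊆ U), ENNReal.ofReal (mo f (cube a l))

/-- The nonhomogeneous `bmo_lam` norm of `f` over `U`. -/
def bmoNorm (U : Set (Eu n)) (lam : ℝ) (f : Eu n → ℝ) : ℝ≥0∞ :=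
  (⨆ (a : Eu n) (l : ℝ) (_ : 0 < l) (_ : l < lam) (_ : cube a l ⊆ U),
      ENNReal.ofReal (mo f (cube a l))) +
  ⨆ (a : Eu n) (l : ℝ) (_ : lam ≤ l) (_ : cube a l ⊆ U),
      ENNReal.ofReal |avg f (cube a l)|

/-- `f ∈ bmo_lam(U)`: integrable on every cube contained in `U`, with finite norm. -/
def MemBmo (U : Set (Eu n)) (lam : ℝ) (f : Eu n → ℝ) : Prop :=
  (∀ (a : Eu n) (l : ℝ), 0 < l → cube a l ⊆ U → IntegrableOn f (cube a l)) ∧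
    bmoNorm U lam f < ⊤

/-- Distance between two sets. -/
def setDist (s t : Set (Eu n)) : ℝ := sInf (Set.image2 dist s t)

/-- A Whitney decomposition of an open set `O`, given as a set of
(lower corner, sidelength) pairs of closed dyadic cubes. -/
structure IsWhitney (O : Set (Eu n)) (W : Set (Eu n × ℝ)) : Prop where
  countable : W.Countable
  dyadic : ∀ q ∈ W, IsDyadic q.1 q.2
  disjointInteriors : ∀ q ∈ W, ∀ q' ∈ W, q ≠ q' →
    interior (cube q.1 q.2) ∩ interior (cube q'.1 q'.2) = ∅
  cover : ⋃ q ∈ W, cube q.1 q.2 = O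
  distLower : ∀ q ∈ W, q.2 ≤ setDist (cube q.1 q.2) (frontier O)
  distUpper : ∀ q ∈ W, setDist (cube q.1 q.2) (frontier O) ≤ 4 * Real.sqrt n * q.2
  sizes : ∀ q ∈ W, ∀ q' ∈ W, (cube q.1 q.2 ∩ cube q'.1 q'.2).Nonempty →
    q.2 / q'.2 ∈ Set.Icc (1/4 : ℝ) 4

/-- Extension hypothesis for `(Ω, lam, C)`: every `f ∈ bmo_lam(Ω)` admits an
extension `F` to `ℝⁿ` with `‖F‖_{BMO(ℝⁿ)} ≤ C ‖f‖_{bmo_lam(Ω)}`. -/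
def ExtHyp (Ω : Set (Eu n)) (lam C : ℝ) : Prop :=
  ∀ f : Eu n → ℝ, MemBmo Ω lam f → ∃ F : Eu n → ℝ,
    (∀ (a : Eu n) (l : ℝ), 0 < l → IntegrableOn F (cube a l)) ∧
    (∀ x ∈ Ω, F x = f x) ∧
    bmoSup Set.univ F ≤ ENNReal.ofReal C * bmoNorm Ω lam f

/-- The set `S_lam = {x ∈ Ω : d_Ω(x) ≥ lam/4}`. -/
def Slam (Ω : Set (Eu n)) (lam : ℝ) : Set (Eu n) := {x ∈ Ω | lam / 4 ≤ dOm Ω x}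

/-- `η_lam(x,y) = k_Ω(x, S_lam) + k_Ω(y, S_lam)`. -/
def etaLam (Ω : Set (Eu n)) (lam : ℝ) (x y : Eu n) : ℝ :=
  kDistSet Ω x (Slam Ω lam) + kDistSet Ω y (Slam Ω lam)

/-
If every interior point of `Q` were within `ε ℓ(Q)/32` of `∂Ω`, there would be points `x₁, x₂ ∈ Ω`
close to the centre of `Q` and to a point at distance `ℓ(Q)/4` from it. The midpoint (in the sense
of distance to `x₁`) of an `(ε,δ)`-curve from `x₁` to `x₂` is at distance `≥ ε |x₁ - x₂| / 4` from
`∂Ω` and still lies in `Q`, since `ε ≤ 2` in every proper `(ε,δ)`-domain; this is a contradiction.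
-/

open Topology

lemma IsDyadic.sidelength_pos {a : Eu n} {l : ℝ} (h : IsDyadic a l) : 0 < l := by
  obtain ⟨k, -, rfl, -⟩ := h
  positivity

lemma IsDom.nontrivial {Ω : Set (Eu n)} (hΩ : IsDom Ω) : Nontrivial (Eu n) := by
  obtain ⟨x, hx⟩ := hΩ.2.1.nonempty
  obtain ⟨y, hy⟩ := ne_univ_iff_exists_notMem Ω |>.mp hΩ.2.2
  exact nontrivial_of_ne x y (ne_of_mem_of_not_mem hx hy)

lemma IsDom.frontier_nonempty {Ω : Set (Eu n)} (hΩ : IsDom Ω) : (frontier Ω).Nonempty :=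
  nonempty_frontier_iff.mpr ⟨hΩ.2.1.nonempty, hΩ.2.2⟩

lemma exists_mem_dist_lt_of_dOm_lt {Ω : Set (Eu n)} (hfr : (frontier Ω).Nonempty) {x : Eu n}
    {r : ℝ} (h : dOm Ω x < r) : ∃ y ∈ Ω, dist x y < r := by
  obtain ⟨w, hw, hxw⟩ := (infDist_lt_iff hfr).mp h
  obtain ⟨y, hy, hwy⟩ :=
    Metric.mem_closure_iff.mp (frontier_subset_closure hw) (r - dist x w) (by linarith)
  exact ⟨y, hy, by linarith [dist_triangle x w y]⟩

def cubeCenter (a : Eu n) (l : ℝ) : Eu n := WithLp.toLp 2 fun i => a i + l / 2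

lemma ball_cubeCenter_subset_interior (a : Eu n) (l : ℝ) :
    ball (cubeCenter a l) (l / 2) ⊆ interior (cube a l) := by
  refine interior_maximal (fun u hu i => ?_) isOpen_ball
  have hi : |u i - (a i + l / 2)| < l / 2 :=
    (PiLp.dist_apply_le u (cubeCenter a l) i).trans_lt (mem_ball.mp hu)
  obtain ⟨h₁, h₂⟩ := abs_lt.mp hi
  exact ⟨by linarith, by linarith⟩

lemma IsCurve.exists_dist_eq {Ω : Set (Eu n)} {γ : ℝ → Eu n} {x y : Eu n}
    (hγ : IsCurve Ω γ x y) {r : ℝ} (hr : r ∈ Icc 0 (dist x y)) :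
    ∃ t ∈ Icc (0 : ℝ) 1, dist (γ t) x = r := by
  obtain ⟨K, hK⟩ := hγ.lipschitz
  have hcont : ContinuousOn (fun t => dist (γ t) x) (Icc 0 1) :=
    (continuous_id.dist continuous_const).comp_continuousOn hK.continuousOn
  refine intermediate_value_Icc zero_le_one hcont ?_
  simpa only [hγ.source, hγ.target, dist_self, dist_comm y x] using hr

namespace IsEpsDeltaDomain

variable {Ω : Set (Eu n)} {ε δ : ℝ}

lemma exists_dist_eq_half_le_dOm (hED : IsEpsDeltaDomain Ω ε δ) (hε : 0 ≤ ε) {x y : Eu n}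
    (hx : x ∈ Ω) (hy : y ∈ Ω) (hxy : dist x y < δ) :
    ∃ z, dist z x = dist x y / 2 ∧ ε * dist x y / 4 ≤ dOm Ω z := by
  obtain ⟨γ, hγ, -, hfar⟩ := hED x hx y hy hxy
  have hxy₀ : 0 ≤ dist x y := dist_nonneg
  obtain ⟨t, ht, hzx⟩ := hγ.exists_dist_eq (r := dist x y / 2) ⟨by positivity, by linarith⟩
  refine ⟨γ t, hzx, ?_⟩
  rcases hxy₀.eq_or_lt with h0 | h0
  · rw [← h0, mul_zero, zero_div]
    exact infDist_nonneg
  have hzy : dist x y / 2 ≤ dist (γ t) y := by linarith [dist_triangle_left x y (γ t)]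
  calc ε * dist x y / 4 = ε * (dist x y / 2 * (dist x y / 2)) / dist x y := by
        field_simp; ring
    _ ≤ ε * (dist (γ t) x * dist (γ t) y) / dist x y := by rw [hzx]; gcongr
    _ ≤ dOm Ω (γ t) := hfar t ht

lemma mul_dist_le (hED : IsEpsDeltaDomain Ω ε δ) (hε : 0 ≤ ε) {x y : Eu n}
    (hx : x ∈ Ω) (hy : y ∈ Ω) (hxy : dist x y < δ) :
    ε * dist x y ≤ 4 * dOm Ω x + 2 * dist x y := by
  obtain ⟨z, hzx, hz⟩ := hED.exists_dist_eq_half_le_dOm hε hx hy hxy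
  have : dOm Ω z ≤ dOm Ω x + dist z x := infDist_le_infDist_add_dist
  linarith

lemma le_two (hED : IsEpsDeltaDomain Ω ε δ) (hO : IsOpen Ω) (hfr : (frontier Ω).Nonempty)
    (hδ : 0 < δ) : ε ≤ 2 := by
  by_contra! hε
  obtain ⟨w, hw⟩ := hfr
  have hwΩ : w ∈ closure Ω := frontier_subset_closure hw
  obtain ⟨y, hy, hwy⟩ := Metric.mem_closure_iff.mp hwΩ δ hδ
  have hwy₀ : 0 < dist w y := dist_pos.mpr fun h => (h ▸ hO.frontier_eq ▸ hw).2 hy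
  -- `dOm Ω` vanishes at `w` while `dist w y > 0`, so `mul_dist_le` fails at points of `Ω` near `w`
  have hnear : ∀ᶠ x in 𝓝 w, 4 * dOm Ω x < (ε - 2) * dist x y ∧ dist x y < δ := by
    have hcont : Continuous fun x => (ε - 2) * dist x y - 4 * dOm Ω x :=
      (continuous_const.mul (continuous_id.dist continuous_const)).sub
        (continuous_const.mul (continuous_infDist_pt _))
    have hpos : 0 < (ε - 2) * dist w y - 4 * dOm Ω w := by
      rw [dOm, infDist_zero_of_mem hw]; nlinarith
    filter_upwards [continuousAt_const.eventually_lt hcont.continuousAt hpos,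
      (continuous_id.dist continuous_const).continuousAt.eventually_lt continuousAt_const hwy]
      with x h₁ h₂
    exact ⟨by linarith, h₂⟩
  obtain ⟨x, ⟨hdx, hxy⟩, hx⟩ := (hnear.and_frequently (mem_closure_iff_frequently.mp hwΩ)).exists
  linarith [hED.mul_dist_le (by linarith) hx hy hxy]

end IsEpsDeltaDomain

theorem stmt_5_general (n : ℕ) (Ω : Set (Eu n)) (hΩ : IsDom Ω)
    (ε δ : ℝ) (hε : 0 < ε) (hED : IsEpsDeltaDomain Ω ε δ)
    (a : Eu n) (l : ℝ) (hdy : IsDyadic a l) (hl : l < δ) :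
    ∃ z ∈ interior (cube a l), ε * l / 32 ≤ dOm Ω z := by
  set c := cubeCenter a l
  have hl₀ := hdy.sidelength_pos
  have hε₂ : ε ≤ 2 := hED.le_two hΩ.1 hΩ.frontier_nonempty (hl₀.trans hl)
  have hsmall : ε * l / 32 ≤ l / 16 := by nlinarith
  have hmem : ∀ z, dist z c < l / 2 → z ∈ interior (cube a l) :=
    fun z hz => ball_cubeCenter_subset_interior a l (mem_ball.mpr hz)
  by_contra! hfar
  have hnear : ∀ q, dist q c < l / 2 → ∃ x ∈ Ω, dist q x < l / 16 := fun q hq =>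
    exists_mem_dist_lt_of_dOm_lt hΩ.frontier_nonempty ((hfar q (hmem q hq)).trans_le hsmall)
  have := hΩ.nontrivial
  obtain ⟨v, hv⟩ := exists_norm_eq (Eu n) (by positivity : 0 ≤ l / 4)
  have hpc : dist (c + v) c = l / 4 := by rw [dist_self_add_left, hv]
  obtain ⟨x₁, hx₁, hcx₁⟩ := hnear c (by rw [dist_self]; positivity)
  obtain ⟨x₂, hx₂, hpx₂⟩ := hnear (c + v) (by linarith)
  have hx₁₂ : dist x₁ x₂ < 3 * l / 8 := by
    linarith [dist_triangle4 x₁ c (c + v) x₂, dist_comm x₁ c, dist_comm c (c + v)]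
  have hx₁₂' : l / 8 < dist x₁ x₂ := by
    linarith [dist_triangle4 c x₁ x₂ (c + v), dist_comm x₂ (c + v), dist_comm c (c + v)]
  obtain ⟨z, hzx₁, hz⟩ := hED.exists_dist_eq_half_le_dOm hε.le hx₁ hx₂ (by linarith)
  have hzc : dist z c < l / 2 := by linarith [dist_triangle z x₁ c, dist_comm x₁ c]
  exact (hfar z (hmem z hzc)).not_ge (by nlinarith)

/-- in an `(ε,δ)`-domain, every dyadic cube of sidelength `< δ`
contains an interior point far from the boundary. -/
theorem stmt_5 (n : ℕ) (hn : 1 ≤ n) (Ω : Set (Eu n)) (hΩ : IsDom Ω)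
    (ε δ : ℝ) (hε : 0 < ε) (hδ : 0 < δ) (hED : IsEpsDeltaDomain Ω ε δ)
    (a : Eu n) (l : ℝ) (hdy : IsDyadic a l) (hl : l < δ) :
    ∃ z ∈ interior (cube a l), ε * l / 32 ≤ dOm Ω z :=
  stmt_5_general n Ω hΩ ε δ hε hED a l hdy hl
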